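/- arXiv:1506.06515 — 4 statements merged into one kernel-verified Lean document; each statement's English description precedes it below -/
import Mathlib

section
/- Let 𝒢 be a sequence of covers with inverse limit (X,f), and suppose (X,f) is a Cantor system (X is homeomorphic to the Cantor set). For a walk or circuit w in G_m and n < m write E_n(w) := φ_{m,n}(E(w)) and V_n(w) := φ_{m,n}(V(w)) (images of the edge set and vertex set of w). Then the following seven conditions are mutually equivalent: (1) (X,f) is minimal; (2) for all n ∈ ℕ there exist N > n and l ≥ 1 such that for all m ≥ N and all w ∈ W(G_m,l), E_n(w) = E_n; (3) for all n ∈ ℕ there exist N > n and l ≥ 1 such that for all m ≥ N and all w ∈ W(G_m,l), V_n(w) = V_n; (4) for all n ∈ ℕ there exists N > n such that for all m ≥ N and all circuit graphs c ∈ 𝒞(G_m), E_n(c) = E_n; (5) for all n ∈ ℕ there exists N > n such that for all m ≥ N and all c ∈ 𝒞(G_m), V_n(c) = V_n; (6) for all n ∈ ℕ there exists N > n such that for every m ≥ N there exists l_m ≥ 1 such that for all w ∈ W(G_m,l_m), E_n(w) = E_n; (7) for all n ∈ ℕ there exists N > n such that for every m ≥ N there exists l_m ≥ 1 such that for all w ∈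 W(G_m,l_m), V_n(w) = V_n. -/
open Filter Topology MeasureTheory

/-- A (directed) graph on a vertex set `V`: an edge relation `E ⊆ V × V`
whose two coordinate projections are surjective. -/
structure DirGraph (V : Type) : Type where
  E : Set (V × V)
  surj_init : ∀ v : V, ∃ u : V, (v, u) ∈ E
  surj_term : ∀ v : V, ∃ u : V, (u, v) ∈ E

/-- A walk of length `l` in `G`. -/
def IsWalk {V : Type} (G : DirGraph V) (l : ℕ) (w : Fin (l + 1) → V) : Prop :=
  ∀ i : Fin l, (w i.castSucc, w i.succ) ∈ G.E

/-- The edge set of a walk. -/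
def walkEdges {V : Type} {l : ℕ} (w : Fin (l + 1) → V) : Set (V × V) :=
  {e | ∃ i : Fin l, e = (w i.castSucc, w i.succ)}

/-- `c` is the edge set of a circuit of `G`: a closed walk whose vertices are
pairwise distinct except that the initial and terminal vertices coincide. -/
def IsCircuitIn {V : Type} (G : DirGraph V) (c : Set (V × V)) : Prop :=
  ∃ l : ℕ, 0 < l ∧ ∃ w : Fin (l + 1) → V,
    IsWalk G l w ∧ w (Fin.last l) = w 0 ∧
    (∀ i j : Fin (l + 1), i < j → w i = w j → i = 0 ∧ j = Fin.last l) ∧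
    c = walkEdges w

/-- The set `𝒞(G)` of circuit graphs of `G` (a circuit graph is identified
with its edge set). -/
def circuitsOf {V : Type} (G : DirGraph V) : Set (Set (V × V)) :=
  {c | IsCircuitIn G c}

/-- The vertex set of a circuit graph (given by its edge set). -/
def circVerts {V : Type} (c : Set (V × V)) : Set V :=
  {v | ∃ e ∈ c, v = e.1 ∨ v = e.2}

/-- The element `Σ_{e ∈ E(c)} e` of the vector space with basis the edges,
associated with a circuit graph `c`. -/
noncomputable def circVec {V : Type} (c : Set (V × V)) : V × V → ℝ :=
  c.indicator fun _ => 1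

/-- `c̃ = (1/Per(c))·c` where `Per(c)` is the number of edges of `c`. -/
noncomputable def circTilde {V : Type} (c : Set (V × V)) : V × V → ℝ :=
  fun e => ((Set.ncard c : ℝ))⁻¹ * circVec c e

/-- Membership in `ℳ(G)`: nonnegative coefficients supported on the edges. -/
def MemM {V : Type} [Fintype V] (G : DirGraph V) (a : V × V → ℝ) : Prop :=
  (∀ e, 0 ≤ a e) ∧ ∀ e, e ∉ G.E → a e = 0

/-- Membership in `ℐ(G)`: at every vertex the incoming coefficient sum equals
the outgoing coefficient sum. -/
def MemI {V : Type} [Fintype V] (G : DirGraph V) (a : V × V → ℝ) : Prop :=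
  MemM G a ∧ ∀ v : V, (∑ u : V, a (u, v)) = ∑ u : V, a (v, u)

/-- Membership in `𝒫(G)`: elements of `ℐ(G)` of total mass `1`. -/
def MemP {V : Type} [Fintype V] (G : DirGraph V) (a : V × V → ℝ) : Prop :=
  MemI G a ∧ (∑ e : V × V, a e) = 1

/-- The action of a map on edges. -/
def edgeMap {V₁ V₂ : Type} (ψ : V₁ → V₂) (e : V₁ × V₁) : V₂ × V₂ := (ψ e.1, ψ e.2)

/-- `ψ : G₁ → G₂` is a cover: an edge-surjective, positive-directional
graph homomorphism. -/
structure IsCover {V₁ V₂ : Type} (G₁ : DirGraph V₁) (G₂ : DirGraph V₂) (ψ : V₁ → V₂) : Prop where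
  hom : ∀ u v : V₁, (u, v) ∈ G₁.E → (ψ u, ψ v) ∈ G₂.E
  edgeSurj : ∀ e ∈ G₂.E, ∃ u v : V₁, (u, v) ∈ G₁.E ∧ (ψ u, ψ v) = e
  posDir : ∀ u v v' : V₁, (u, v) ∈ G₁.E → (u, v') ∈ G₁.E → ψ v = ψ v'

/-- The induced linear map `ψ_*` on edge vectors: the coefficient of an edge `e`
of the target is the sum of the coefficients of its preimages. -/
noncomputable def pushVec {V₁ V₂ : Type} (ψ : V₁ → V₂) (a : V₁ × V₁ → ℝ) : V₂ × V₂ → ℝ :=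
  fun e => ∑ᶠ e' ∈ {e' : V₁ × V₁ | edgeMap ψ e' = e}, a e'

/-- Euclidean distance on finite-dimensional coordinate spaces. -/
noncomputable def dE {ι : Type} [Fintype ι] (a b : ι → ℝ) : ℝ :=
  Real.sqrt (∑ i : ι, (a i - b i) ^ 2)

/-- A sequence of covers `G₀ ← G₁ ← G₂ ← ⋯` of finite graphs, with `G₀`
the one-vertex graph (with a single loop). -/
structure CoverSystem : Type 1 where
  V : ℕ → Type
  fintypeV : ∀ n, Fintype (V n)
  G : ∀ n, DirGraph (V n)
  φ : ∀ n, V (n + 1) → V n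
  cover : ∀ n, IsCover (G (n + 1)) (G n) (φ n)
  V0_single : ∀ x y : V 0, x = y

namespace CoverSystem

instance (S : CoverSystem) (n : ℕ) : Fintype (S.V n) := S.fintypeV n
instance (S : CoverSystem) (n : ℕ) : TopologicalSpace (S.V n) := ⊥
instance (S : CoverSystem) (n : ℕ) : DiscreteTopology (S.V n) := ⟨rfl⟩

/-- `φ_{n+k, n}` as a composition of the covering maps. -/
def phiIter (S : CoverSystem) (n : ℕ) : ∀ k : ℕ, S.V (n + k) → S.V n
  | 0 => fun v => v
  | k + 1 => fun v => S.phiIter n k (S.φ (n + k) v)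

/-- `φ_{m,n} : V m → V n` for `n ≤ m`. -/
def phiLE (S : CoverSystem) {m n : ℕ} (h : n ≤ m) (v : S.V m) : S.V n :=
  S.phiIter n (m - n) (cast (congrArg S.V (Nat.add_sub_cancel' h).symm) v)

/-- The inverse limit space `X` of the sequence of covers. -/
def X (S : CoverSystem) : Type :=
  { x : ∀ n, S.V n // ∀ n, S.φ n (x (n + 1)) = x n }

instance (S : CoverSystem) : TopologicalSpace S.X :=
  inferInstanceAs (TopologicalSpace { x : ∀ n, S.V n // ∀ n, S.φ n (x (n + 1)) = x n })

instance (S : CoverSystem) : MeasurableSpace S.X := borel S.X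
instance (S : CoverSystem) : BorelSpace S.X := ⟨rfl⟩

/-- The projection `φ_{∞,n} : X → V n`. -/
def proj (S : CoverSystem) (x : S.X) (n : ℕ) : S.V n := Subtype.val x n

/-- `f` is the shift map of the inverse limit: it is compatible with all the
edge relations (this determines `f` uniquely). -/
def IsLimitMap (S : CoverSystem) (f : S.X → S.X) : Prop :=
  ∀ (x : S.X) (n : ℕ), (S.proj x n, S.proj (f x) n) ∈ (S.G n).E

/-- `U(v) = φ_{∞,n}⁻¹(v)`. -/
def USet (S : CoverSystem) {n : ℕ} (v : S.V n) : Set S.X := {x | S.proj x n = v}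

/-- `U(e) = U(u) ∩ f⁻¹(U(v))` for an edge `e = (u,v)`. -/
def UEdge (S : CoverSystem) (f : S.X → S.X) {n : ℕ} (e : S.V n × S.V n) : Set S.X :=
  {x | S.proj x n = e.1 ∧ S.proj (f x) n = e.2}

/-- `μ` is an `f`-invariant Borel measure. -/
def Invariant (S : CoverSystem) (f : S.X → S.X) (μ : Measure S.X) : Prop :=
  ∀ B : Set S.X, MeasurableSet B → μ (f ⁻¹' B) = μ B

/-- `μ` is ergodic: every invariant Borel set is null or conull. -/
def ErgodicM (S : CoverSystem) (f : S.X → S.X) (μ : Measure S.X) : Prop :=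
  ∀ B : Set S.X, MeasurableSet B → f ⁻¹' B = B → μ B = 0 ∨ μ B = 1

/-- The vector `μ_n = Σ_{e ∈ E_n} μ(U(e))·e ∈ Δ_n` of a measure `μ`. -/
noncomputable def muVec (S : CoverSystem) (f : S.X → S.X) (μ : Measure S.X) (n : ℕ) :
    S.V n × S.V n → ℝ :=
  fun e => (μ (S.UEdge f e)).toReal

/-- `Δ_∞`: compatible sequences of elements of the simplices `Δ_n = 𝒫(G_n)`. -/
def DeltaInf (S : CoverSystem) : Set (∀ n, S.V n × S.V n → ℝ) :=
  {x | (∀ n, MemP (S.G n) (x n)) ∧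
    ∀ m n : ℕ, ∀ h : n ≤ m, pushVec (S.phiLE h) (x m) = x n}

/-- `C` is a system of circuits enumerated by `N'`. -/
def IsCircuitSystem (S : CoverSystem) (N' : Set ℕ)
    (C : ∀ n, Set (Set (S.V n × S.V n))) : Prop :=
  ∀ n ∈ N', C n ⊆ circuitsOf (S.G n)

/-- The system of circuits `C` expresses the measure `μ`. -/
def Expresses (S : CoverSystem) (f : S.X → S.X) (μ : Measure S.X)
    (N' : Set ℕ) (C : ∀ n, Set (Set (S.V n × S.V n))) : Prop :=
  ∀ n ∈ N', ∃ s : Set (S.V n × S.V n) → ℝ,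
    (∀ c ∈ C n, 0 ≤ s c) ∧ ∀ e, S.muVec f μ n e = ∑ᶠ c ∈ C n, s c * circTilde c e

/-- The system of circuits `C` expresses every ergodic invariant Borel
probability measure. -/
def ExpressesAllErgodic (S : CoverSystem) (f : S.X → S.X)
    (N' : Set ℕ) (C : ∀ n, Set (Set (S.V n × S.V n))) : Prop :=
  ∀ μ : Measure S.X, IsProbabilityMeasure μ → S.Invariant f μ → S.ErgodicM f μ →
    S.Expresses f μ N' C

/-- `𝒞̄_∞`: the set of limit sequences of sequences of circuits chosen from `C`. -/
def limitsOf (S : CoverSystem) (N' : Set ℕ)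
    (C : ∀ n, Set (Set (S.V n × S.V n))) : Set (∀ m, S.V m × S.V m → ℝ) :=
  {y | ∃ c : ∀ n, Set (S.V n × S.V n), (∀ n ∈ N', c n ∈ C n) ∧
    ∀ m : ℕ, Filter.Tendsto
      (fun n : ℕ => if h : m ≤ n then dE (pushVec (S.phiLE h) (circTilde (c n))) (y m) else 1)
      (Filter.atTop ⊓ Filter.principal N') (nhds 0)}

end CoverSystem

/-!
On a compact space, a map is minimal exactly when every orbit visits each nonempty open set
within a bounded time. In the inverse limit the cylinders over the vertices of `G_n` form a basis,
and a point lying over the start of a walk of `G_m` follows that walk at every level `k ≤ m` for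
`m - k` steps. Bounded return times therefore become walks of `G_m` whose image covers `G_n`, and
conversely covering walks are traced by the orbit of any point of a closed invariant set, which is
thus dense. Positive directionality upgrades covering the vertices of `G_{n+1}` to covering the
edges of `G_n`. A circuit unrolls into walks of every length, and every walk longer than `|V_m|`
contains a circuit, which ties the circuit conditions to the walk conditions.
-/

section Walks

variable {V V₁ V₂ : Type}

theorem isWalk_iff_walkEdges_subset {G : DirGraph V} {l : ℕ} {w : Fin (l + 1) → V} :
    IsWalk G l w ↔ walkEdges w ⊆ G.E := by
  refine ⟨?_, fun h i => h ⟨i, rfl⟩⟩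
  rintro hw e ⟨i, rfl⟩
  exact hw i

theorem IsWalk.comp {G₁ : DirGraph V₁} {G₂ : DirGraph V₂} {ψ : V₁ → V₂}
    (hψ : ∀ u v, (u, v) ∈ G₁.E → (ψ u, ψ v) ∈ G₂.E) {l : ℕ} {w : Fin (l + 1) → V₁}
    (hw : IsWalk G₁ l w) : IsWalk G₂ l (ψ ∘ w) :=
  fun i => hψ _ _ (hw i)

theorem fst_image_walkEdges_subset_range {l : ℕ} (w : Fin (l + 1) → V) :
    Prod.fst '' walkEdges w ⊆ Set.range w := by
  rintro _ ⟨_, ⟨i, rfl⟩, rfl⟩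
  exact ⟨_, rfl⟩

theorem image_fst_image_eq_univ {G₂ : DirGraph V₂} {ψ : V₁ → V₂} {c : Set (V₁ × V₁)}
    (h : edgeMap ψ '' c = G₂.E) : ψ '' (Prod.fst '' c) = Set.univ := by
  refine Set.eq_univ_of_forall fun v => ?_
  obtain ⟨u, hu⟩ := G₂.surj_init v
  obtain ⟨e, he, hev⟩ := h.symm ▸ hu
  exact ⟨e.1, ⟨e, he, rfl⟩, congrArg Prod.fst hev⟩

theorem image_range_eq_univ_of_edgeMap_image_eq {G₂ : DirGraph V₂} {ψ : V₁ → V₂}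
    {l : ℕ} {w : Fin (l + 1) → V₁} (h : edgeMap ψ '' walkEdges w = G₂.E) :
    ψ '' Set.range w = Set.univ :=
  Set.eq_univ_of_univ_subset <|
    (image_fst_image_eq_univ h).ge.trans (Set.image_mono (fst_image_walkEdges_subset_range w))

/-- Positive directionality of `ψ` determines the image of the terminal vertex of an edge of `c`
from that of its source. -/
theorem IsCover.edgeMap_comp_image_eq {V₀ : Type} {G₀ : DirGraph V₀} {G₁ : DirGraph V₁}
    {G₂ : DirGraph V₂} {ψ : V₁ → V₂} (hψ : IsCover G₁ G₂ ψ) {χ : V₀ → V₁}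
    (hχ : ∀ u v, (u, v) ∈ G₀.E → (χ u, χ v) ∈ G₁.E) {c : Set (V₀ × V₀)} (hc : c ⊆ G₀.E)
    (hsrc : χ '' (Prod.fst '' c) = Set.univ) : edgeMap (ψ ∘ χ) '' c = G₂.E := by
  refine subset_antisymm ?_ fun e he => ?_
  · rintro _ ⟨⟨u, v⟩, huv, rfl⟩
    exact hψ.hom _ _ (hχ u v (hc huv))
  obtain ⟨a, b, hab, rfl⟩ := hψ.edgeSurj e he
  obtain ⟨_, ⟨⟨u, v⟩, huv, rfl⟩, hua⟩ := hsrc.symm ▸ Set.mem_univ a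
  refine ⟨(u, v), huv, ?_⟩
  have hχuv : (a, χ v) ∈ G₁.E := hua ▸ hχ u v (hc huv)
  simp only [edgeMap, Function.comp_apply, hua, hψ.posDir a b (χ v) hab hχuv]

end Walks

section Circuits

variable {V : Type} {G : DirGraph V} {c : Set (V × V)}

theorem IsCircuitIn.subset (hc : IsCircuitIn G c) : c ⊆ G.E := by
  obtain ⟨l, -, w, hw, -, -, rfl⟩ := hc
  exact isWalk_iff_walkEdges_subset.mp hw

theorem IsCircuitIn.nonempty (hc : IsCircuitIn G c) : c.Nonempty := by
  obtain ⟨l, hl, w, -, -, -, rfl⟩ := hc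
  exact ⟨_, ⟨⟨0, hl⟩, rfl⟩⟩

theorem IsCircuitIn.snd_mem_fst_image (hc : IsCircuitIn G c) {e : V × V} (he : e ∈ c) :
    e.2 ∈ Prod.fst '' c := by
  obtain ⟨l, hl, w, -, hclosed, -, rfl⟩ := hc
  obtain ⟨i, rfl⟩ := he
  by_cases hi : i.val + 1 < l
  · exact ⟨_, ⟨⟨i.val + 1, hi⟩, rfl⟩, congrArg w (Fin.ext rfl)⟩
  · refine ⟨_, ⟨⟨0, hl⟩, rfl⟩, ?_⟩
    have hlast : i.succ = Fin.last l := Fin.ext (by rw [Fin.val_succ, Fin.val_last]; omega)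
    simp only [hlast, hclosed]
    rfl

theorem IsCircuitIn.circVerts_eq (hc : IsCircuitIn G c) : circVerts c = Prod.fst '' c := by
  refine subset_antisymm ?_ fun _ ⟨e, he, hv⟩ => ⟨e, he, Or.inl hv.symm⟩
  rintro v ⟨e, he, rfl | rfl⟩
  · exact ⟨e, he, rfl⟩
  · exact hc.snd_mem_fst_image he

/-- Following, from each source, a chosen edge of `c` produces walks of every length. -/
theorem exists_walkEdges_subset (hne : c.Nonempty) (hsnd : ∀ e ∈ c, e.2 ∈ Prod.fst '' c)
    (l : ℕ) : ∃ w : Fin (l + 1) → V, walkEdges w ⊆ c := by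
  have hnext : ∀ v ∈ Prod.fst '' c, ∃ u, (v, u) ∈ c := by
    rintro _ ⟨e, he, rfl⟩
    exact ⟨e.2, he⟩
  choose! next hnext using hnext
  obtain ⟨e₀, he₀⟩ := hne
  have hmem : ∀ k, next^[k] e₀.1 ∈ Prod.fst '' c := by
    intro k
    induction k with
    | zero => exact ⟨e₀, he₀, rfl⟩
    | succ k ih =>
      rw [Function.iterate_succ_apply']
      exact hsnd _ (hnext _ ih)
  refine ⟨fun i => next^[i] e₀.1, ?_⟩
  rintro _ ⟨i, rfl⟩
  simpa only [Fin.val_castSucc, Fin.val_succ, Function.iterate_succ_apply'] using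
    hnext _ (hmem i)

def walkSegment {l : ℕ} (w : Fin (l + 1) → V) (i d : ℕ) (h : i + d ≤ l) : Fin (d + 1) → V :=
  fun t => w ⟨i + t, by omega⟩

theorem walkEdges_walkSegment_subset {l : ℕ} (w : Fin (l + 1) → V) {i d : ℕ} (h : i + d ≤ l) :
    walkEdges (walkSegment w i d h) ⊆ walkEdges w := by
  rintro _ ⟨t, rfl⟩
  exact ⟨⟨i + t, by omega⟩, rfl⟩

/-- A shortest closed sub-walk of a walk visiting some vertex twice is a circuit. -/
theorem IsWalk.exists_circuit_subset [Fintype V] {l : ℕ} {w : Fin (l + 1) → V}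
    (hw : IsWalk G l w) (hl : Fintype.card V < l + 1) :
    ∃ c, IsCircuitIn G c ∧ c ⊆ walkEdges w := by
  classical
  have hrep : ∃ d, 0 < d ∧ ∃ i : ℕ, ∃ h : i + d ≤ l, w ⟨i, by omega⟩ = w ⟨i + d, by omega⟩ := by
    obtain ⟨a, b, hab, hwab⟩ := Fintype.exists_ne_map_eq_of_card_lt w (by simpa using hl)
    rcases Fin.lt_or_lt_of_ne hab with h | h
    · exact ⟨b - a, by omega, a, by omega, by simpa [Nat.add_sub_cancel' h.le] using hwab⟩
    · exact ⟨a - b, by omega, b, by omega, by simpa [Nat.add_sub_cancel' h.le] using hwab.symm⟩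
  obtain ⟨hd, i, hid, hrepeat⟩ := Nat.find_spec hrep
  set d := Nat.find hrep
  have hsub := walkEdges_walkSegment_subset w hid
  refine ⟨_, ⟨d, hd, walkSegment w i d hid,
    isWalk_iff_walkEdges_subset.mpr (hsub.trans (isWalk_iff_walkEdges_subset.mp hw)),
    by simpa [walkSegment] using hrepeat.symm, fun s t hst hst' => ?_, rfl⟩, hsub⟩
  have hst : s.val < t.val := hst
  have hmin : d ≤ t - s := Nat.find_min' hrep ⟨by omega, i + s, by omega, by
    simpa [walkSegment, Nat.add_sub_cancel' hst.le, Nat.add_assoc] using hst'⟩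
  have := t.isLt
  exact ⟨Fin.ext (by rw [Fin.val_zero]; omega), Fin.ext (by rw [Fin.val_last]; omega)⟩

end Circuits

section Dynamics

variable {X : Type*} [TopologicalSpace X]

def IsMinimalMap (f : X → X) : Prop :=
  ∀ Y : Set X, IsClosed Y → Y.Nonempty → f '' Y = Y → Y = Set.univ

variable [CompactSpace X] [T2Space X] {f : X → X}

theorem image_iInter_eq_of_antitone (hf : Continuous f) {Z : ℕ → Set X} (hZ : Antitone Z)
    (hZc : ∀ k, IsClosed (Z k)) : f '' ⋂ k, Z k = ⋂ k, f '' Z k := by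
  refine subset_antisymm (Set.image_iInter_subset Z f) fun y hy => ?_
  have hfib : (⋂ k, f ⁻¹' {y} ∩ Z k).Nonempty := by
    refine IsCompact.nonempty_iInter_of_sequence_nonempty_isCompact_isClosed _
      (fun k => Set.inter_subset_inter_right _ (hZ k.le_succ)) (fun k => ?_)
      ((isClosed_singleton.preimage hf).inter (hZc 0)).isCompact
      (fun k => (isClosed_singleton.preimage hf).inter (hZc k))
    obtain ⟨x, hx, hxy⟩ := Set.mem_iInter.mp hy k
    exact ⟨x, hxy, hx⟩
  obtain ⟨x, hx⟩ := hfib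
  simp only [Set.mem_iInter, Set.mem_inter_iff, Set.mem_preimage,
    Set.mem_singleton_iff] at hx
  exact ⟨x, Set.mem_iInter.mpr fun k => (hx k).2, (hx 0).1⟩

/-- `⋂ₖ fᵏ(C)` is a nonempty closed set `Y ⊆ C` with `f(Y) = Y`. -/
theorem IsMinimalMap.eq_univ_of_mapsTo (hmin : IsMinimalMap f) (hf : Continuous f)
    {C : Set X} (hC : IsClosed C) (hne : C.Nonempty) (hmaps : Set.MapsTo f C C) :
    C = Set.univ := by
  set Z : ℕ → Set X := fun k => f^[k] '' C
  have hZc : ∀ k, IsClosed (Z k) :=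
    fun k => (hC.isCompact.image (hf.iterate k)).isClosed
  have hZsucc : ∀ k, Z (k + 1) = f '' Z k := fun k => by
    simp only [Z, Function.iterate_succ', Set.image_comp]
  have hZ : Antitone Z := antitone_nat_of_succ_le fun k => by
    simp only [Z, Function.iterate_succ, Set.image_comp]
    exact Set.image_mono hmaps.image_subset
  have hY : f '' ⋂ k, Z k = ⋂ k, Z k := by
    rw [image_iInter_eq_of_antitone hf hZ hZc, ← hZ.iInter_nat_add 1]
    simp only [hZsucc]
  have hYne : (⋂ k, Z k).Nonempty :=
    IsCompact.nonempty_iInter_of_sequence_nonempty_isCompact_isClosed Z (fun k => hZ k.le_succ)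
      (fun k => hne.image _) (hZc 0).isCompact hZc
  have hYuniv := hmin _ (isClosed_iInter hZc) hYne hY
  refine Set.eq_univ_of_univ_subset (hYuniv ▸ (Set.iInter_subset Z 0).trans ?_)
  simp only [Z, Function.iterate_zero, Set.image_id, subset_refl]

/-- The sets `f⁻ⁱ(U)` cover `X`: the complement of their union is closed and mapped into itself. -/
theorem IsMinimalMap.exists_iterate_mem (hmin : IsMinimalMap f) (hf : Continuous f)
    {U : Set X} (hU : IsOpen U) (hne : U.Nonempty) :
    ∃ L, ∀ x, ∃ i ≤ L, f^[i] x ∈ U := by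
  have hopen : ∀ i, IsOpen (f^[i] ⁻¹' U) := fun i => hU.preimage (hf.iterate i)
  have hcover : (⋃ i, f^[i] ⁻¹' U) = Set.univ := by
    by_contra hA
    have hcompl := hmin.eq_univ_of_mapsTo hf (isOpen_iUnion hopen).isClosed_compl
      (Set.nonempty_compl.mpr hA) fun x hx hfx => hx ?_
    · obtain ⟨x, hx⟩ := hne
      exact (Set.eq_univ_iff_forall.mp hcompl x) (Set.mem_iUnion.mpr ⟨0, hx⟩)
    · obtain ⟨i, hi⟩ := Set.mem_iUnion.mp hfx
      exact Set.mem_iUnion.mpr ⟨i + 1, by rwa [Set.mem_preimage, Function.iterate_succ_apply]⟩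
  obtain ⟨t, ht⟩ := isCompact_univ.elim_finite_subcover _ hopen hcover.ge
  refine ⟨t.sup id, fun x => ?_⟩
  obtain ⟨i, hi, hx⟩ := Set.mem_iUnion₂.mp (ht (Set.mem_univ x))
  exact ⟨i, Finset.le_sup (f := id) hi, hx⟩

end Dynamics

namespace CoverSystem

variable (S : CoverSystem)

theorem phiLE_eq_phiIter {n m d : ℕ} (hm : m = n + d) (h : n ≤ m) (v : S.V m) :
    S.phiLE h v = S.phiIter n d (cast (congrArg S.V hm) v) := by
  subst hm
  have hd : n + d - n = d := by omega
  unfold phiLE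
  generalize_proofs h₁
  revert h₁
  rw [hd]
  intro h₁
  rfl

theorem phiLE_refl {m : ℕ} (h : m ≤ m) (v : S.V m) : S.phiLE h v = v :=
  S.phiLE_eq_phiIter (d := 0) rfl h v

theorem phiLE_succ {n m : ℕ} (h : n ≤ m + 1) (h' : n ≤ m) (v : S.V (m + 1)) :
    S.phiLE h v = S.phiLE h' (S.φ m v) := by
  obtain ⟨d, rfl⟩ := Nat.exists_eq_add_of_le h'
  rw [S.phiLE_eq_phiIter (d := d + 1) rfl h, S.phiLE_eq_phiIter (d := d) rfl h']
  rfl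

theorem phiLE_phiLE {n k m : ℕ} (hkm : k ≤ m) (hnk : n ≤ k) (hnm : n ≤ m) (v : S.V m) :
    S.phiLE hnk (S.phiLE hkm v) = S.phiLE hnm v := by
  induction m, hkm using Nat.le_induction with
  | base => rw [phiLE_refl]
  | succ m hkm ih => rw [S.phiLE_succ _ hkm, S.phiLE_succ hnm (by omega), ih]

theorem φ_phiLE {n m : ℕ} (h : n + 1 ≤ m) (h' : n ≤ m) (v : S.V m) :
    S.φ n (S.phiLE h v) = S.phiLE h' v := by
  rw [← S.phiLE_phiLE h n.le_succ h', S.phiLE_succ _ le_rfl, phiLE_refl]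

theorem phiLE_mem_E {n m : ℕ} (h : n ≤ m) {u v : S.V m} (he : (u, v) ∈ (S.G m).E) :
    (S.phiLE h u, S.phiLE h v) ∈ (S.G n).E := by
  induction m, h using Nat.le_induction with
  | base => rwa [phiLE_refl, phiLE_refl]
  | succ m hm ih =>
    rw [S.phiLE_succ _ hm, S.phiLE_succ _ hm]
    exact ih ((S.cover m).hom u v he)

theorem phiLE_proj {n m : ℕ} (h : n ≤ m) (x : S.X) : S.phiLE h (S.proj x m) = S.proj x n := by
  induction m, h using Nat.le_induction with
  | base => rw [phiLE_refl]
  | succ m hm ih => rw [S.phiLE_succ _ hm, proj, x.2 m, ← proj, ih]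

theorem edgeMap_phiLE_image_subset {n m : ℕ} (h : n ≤ m) {c : Set (S.V m × S.V m)}
    (hc : c ⊆ (S.G m).E) : edgeMap (S.phiLE h) '' c ⊆ (S.G n).E := by
  rintro _ ⟨⟨u, v⟩, huv, rfl⟩
  exact S.phiLE_mem_E h (hc huv)

theorem edgeMap_phiLE_image_eq {n m : ℕ} (h : n + 1 ≤ m) (h' : n ≤ m)
    {c : Set (S.V m × S.V m)} (hc : c ⊆ (S.G m).E)
    (hsrc : S.phiLE h '' (Prod.fst '' c) = Set.univ) :
    edgeMap (S.phiLE h') '' c = (S.G n).E := by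
  have hcomp : S.φ n ∘ S.phiLE h = S.phiLE h' := funext (S.φ_phiLE h h')
  rw [← hcomp]
  exact (S.cover n).edgeMap_comp_image_eq (fun _ _ => S.phiLE_mem_E h) hc hsrc

theorem φ_surjective (n : ℕ) : Function.Surjective (S.φ n) := fun v => by
  obtain ⟨u, hu⟩ := (S.G n).surj_init v
  obtain ⟨a, b, -, hab⟩ := (S.cover n).edgeSurj (v, u) hu
  exact ⟨a, congrArg Prod.fst hab⟩

noncomputable def lift {m : ℕ} (v : S.V m) : ∀ k, S.V (m + k)
  | 0 => v
  | k + 1 => Function.surjInv (S.φ_surjective (m + k)) (lift v k)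

theorem φ_lift {m : ℕ} (v : S.V m) (k : ℕ) : S.φ (m + k) (S.lift v (k + 1)) = S.lift v k :=
  Function.surjInv_eq _ _

theorem phiLE_lift {m : ℕ} (v : S.V m) (k : ℕ) (h : m ≤ m + k) : S.phiLE h (S.lift v k) = v := by
  induction k with
  | zero => exact S.phiLE_refl h v
  | succ k ih => rw [S.phiLE_succ (m := m + k) h (Nat.le_add_right m k), φ_lift, ih]

noncomputable def liftPoint {m : ℕ} (v : S.V m) : S.X :=
  ⟨fun k => S.phiLE (Nat.le_add_left k m) (S.lift v k), fun k => by
    rw [S.φ_phiLE _ (Nat.le_add_left k m).step, S.phiLE_succ (m := m + k) _ (Nat.le_add_left k m),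
      φ_lift]⟩

theorem proj_liftPoint {m : ℕ} (v : S.V m) : S.proj (S.liftPoint v) m = v :=
  S.phiLE_lift v m (Nat.le_add_left m m)

theorem isClosed_compatible :
    IsClosed {x : ∀ n, S.V n | ∀ n, S.φ n (x (n + 1)) = x n} := by
  simp only [Set.ofPred_forall]
  exact isClosed_iInter fun n =>
    isClosed_eq (continuous_of_discreteTopology.comp (continuous_apply _)) (continuous_apply _)

instance : CompactSpace S.X :=
  isCompact_iff_compactSpace.mp S.isClosed_compatible.isCompact

instance : T2Space S.X :=
  inferInstanceAs (T2Space {x : ∀ n, S.V n // ∀ n, S.φ n (x (n + 1)) = x n})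

theorem continuous_proj (n : ℕ) : Continuous fun x : S.X => S.proj x n :=
  (continuous_apply n).comp continuous_subtype_val

theorem isOpen_USet {n : ℕ} (v : S.V n) : IsOpen (S.USet v) :=
  (isOpen_discrete {v}).preimage (S.continuous_proj n)

theorem exists_USet_subset {O : Set S.X} (hO : IsOpen O) {x : S.X} (hx : x ∈ O) :
    ∃ n, S.USet (S.proj x n) ⊆ O := by
  obtain ⟨O', hO', rfl⟩ := isOpen_induced_iff.mp hO
  obtain ⟨I, u, hu, hIu⟩ := isOpen_pi_iff.mp hO' x.val hx
  refine ⟨I.sup id, fun y hy => hIu fun i hi => ?_⟩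
  have hi' : i ≤ I.sup id := Finset.le_sup (f := id) hi
  have hyx : S.proj y i = S.proj x i := by
    rw [← S.phiLE_proj hi' y, ← S.phiLE_proj hi' x]
    exact congrArg _ hy
  exact (congrArg (· ∈ u i) hyx).mpr (hu i hi).2

end CoverSystem

namespace CoverSystem.IsLimitMap

variable {S : CoverSystem} {f : S.X → S.X}

theorem proj_apply_eq (hf : S.IsLimitMap f) (x : S.X) {k : ℕ} {v : S.V (k + 1)}
    (hv : (S.proj x (k + 1), v) ∈ (S.G (k + 1)).E) : S.proj (f x) k = S.φ k v := by
  rw [← (S.cover k).posDir _ _ _ (hf x (k + 1)) hv]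
  exact ((f x).2 k).symm

protected theorem continuous (hf : S.IsLimitMap f) : Continuous f := by
  have hproj : ∀ k, Continuous fun x => S.proj (f x) k := fun k => by
    choose next hnext using (S.G (k + 1)).surj_init
    have hfactor : (fun x => S.proj (f x) k) = (S.φ k ∘ next) ∘ fun x => S.proj x (k + 1) :=
      funext fun x => hf.proj_apply_eq x (hnext _)
    rw [hfactor]
    exact continuous_of_discreteTopology.comp (S.continuous_proj (k + 1))
  exact (continuous_pi hproj).subtype_mk _

theorem proj_iterate_eq (hf : S.IsLimitMap f) {m l : ℕ} {w : Fin (l + 1) → S.V m}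
    (hw : IsWalk (S.G m) l w) {x : S.X} (hx : S.proj x m = w 0) {i k : ℕ} (hi : i ≤ l)
    (hk : k + i ≤ m) : S.proj (f^[i] x) k = S.phiLE (by omega) (w ⟨i, by omega⟩) := by
  induction i generalizing k with
  | zero => simp only [Function.iterate_zero_apply, Fin.mk_zero, ← hx, phiLE_proj]
  | succ i ih =>
    have hedge : (S.proj (f^[i] x) (k + 1), S.phiLE (show k + 1 ≤ m by omega)
        (w ⟨i + 1, by omega⟩)) ∈ (S.G (k + 1)).E := by
      rw [ih (by omega) (by omega)]
      exact S.phiLE_mem_E _ (hw ⟨i, by omega⟩)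
    rw [Function.iterate_succ_apply', hf.proj_apply_eq _ hedge, S.φ_phiLE]

theorem isWalk_proj_iterate (hf : S.IsLimitMap f) (x : S.X) (m l : ℕ) :
    IsWalk (S.G m) l fun i : Fin (l + 1) => S.proj (f^[i] x) m := fun i => by
  simpa only [Fin.val_castSucc, Fin.val_succ, Function.iterate_succ_apply'] using
    hf (f^[i] x) m

end CoverSystem.IsLimitMap

namespace CoverSystem

variable (S : CoverSystem)

def UniformWalksCoverEdges : Prop :=
  ∀ n : ℕ, ∃ N, n < N ∧ ∃ l, 0 < l ∧ ∀ m, N ≤ m → ∀ h : n ≤ m,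
    ∀ w : Fin (l + 1) → S.V m, IsWalk (S.G m) l w →
      edgeMap (S.phiLE h) '' walkEdges w = (S.G n).E

def UniformWalksCoverVertices : Prop :=
  ∀ n : ℕ, ∃ N, n < N ∧ ∃ l, 0 < l ∧ ∀ m, N ≤ m → ∀ h : n ≤ m,
    ∀ w : Fin (l + 1) → S.V m, IsWalk (S.G m) l w →
      S.phiLE h '' Set.range w = Set.univ

def CircuitsCoverEdges : Prop :=
  ∀ n : ℕ, ∃ N, n < N ∧ ∀ m, N ≤ m → ∀ h : n ≤ m,
    ∀ c ∈ circuitsOf (S.G m), edgeMap (S.phiLE h) '' c = (S.G n).E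

def CircuitsCoverVertices : Prop :=
  ∀ n : ℕ, ∃ N, n < N ∧ ∀ m, N ≤ m → ∀ h : n ≤ m,
    ∀ c ∈ circuitsOf (S.G m), S.phiLE h '' circVerts c = Set.univ

def WalksCoverEdges : Prop :=
  ∀ n : ℕ, ∃ N, n < N ∧ ∀ m, N ≤ m → ∀ h : n ≤ m, ∃ l, 0 < l ∧
    ∀ w : Fin (l + 1) → S.V m, IsWalk (S.G m) l w →
      edgeMap (S.phiLE h) '' walkEdges w = (S.G n).E

def WalksCoverVertices : Prop :=
  ∀ n : ℕ, ∃ N, n < N ∧ ∀ m, N ≤ m → ∀ h : n ≤ m, ∃ l, 0 < l ∧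
    ∀ w : Fin (l + 1) → S.V m, IsWalk (S.G m) l w →
      S.phiLE h '' Set.range w = Set.univ

variable {S}

/-- Return times to the cylinders of level `n + 1` are bounded by `L'`, so the sources of every
walk of length `L' + 1` at a level `m ≥ n + 1 + L'` meet every vertex of `G_{n+1}`. -/
theorem uniformWalksCoverEdges_of_isMinimalMap {f : S.X → S.X} (hf : S.IsLimitMap f)
    (hmin : IsMinimalMap f) : S.UniformWalksCoverEdges := by
  intro n
  have hret : ∀ a : S.V (n + 1), ∃ L, ∀ x, ∃ i ≤ L, f^[i] x ∈ S.USet a := fun a =>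
    hmin.exists_iterate_mem hf.continuous (S.isOpen_USet a) ⟨_, S.proj_liftPoint a⟩
  choose L hL using hret
  obtain ⟨L', hL'⟩ := (Set.finite_range L).bddAbove
  refine ⟨n + 1 + L', by omega, L' + 1, by omega, fun m hm h w hw => ?_⟩
  refine S.edgeMap_phiLE_image_eq (by omega) h (isWalk_iff_walkEdges_subset.mp hw)
    (Set.eq_univ_of_forall fun a => ?_)
  obtain ⟨i, hi, hia : S.proj (f^[i] _) (n + 1) = a⟩ := hL a (S.liftPoint (w 0))
  have hiL : i ≤ L' := hi.trans (hL' ⟨a, rfl⟩)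
  refine ⟨w ⟨i, by omega⟩, ⟨_, ⟨⟨i, by omega⟩, rfl⟩, rfl⟩, ?_⟩
  rw [← hia, hf.proj_iterate_eq hw (S.proj_liftPoint _) (by omega) (by omega)]

theorem UniformWalksCoverEdges.uniformWalksCoverVertices (H : S.UniformWalksCoverEdges) :
    S.UniformWalksCoverVertices := fun n => by
  obtain ⟨N, hN, l, hl, H⟩ := H n
  exact ⟨N, hN, l, hl, fun m hm h w hw => image_range_eq_univ_of_edgeMap_image_eq (H m hm h w hw)⟩

/-- The forward orbit of any point of `Y` meets every cylinder, so `Y` is dense. -/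
theorem isMinimalMap_of_uniformWalksCoverVertices {f : S.X → S.X} (hf : S.IsLimitMap f)
    (H : S.UniformWalksCoverVertices) : IsMinimalMap f := by
  intro Y hY ⟨z, hz⟩ hYf
  have hmaps : Set.MapsTo f Y Y := fun y hy => hYf ▸ Set.mem_image_of_mem f hy
  refine Set.eq_univ_of_forall fun x =>
    hY.closure_eq ▸ mem_closure_iff.mpr fun O hO hxO => ?_
  obtain ⟨n, hn⟩ := S.exists_USet_subset hO hxO
  obtain ⟨N, hN, l, -, H⟩ := H n
  obtain ⟨_, ⟨i, rfl⟩, hi⟩ :=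
    (H N le_rfl hN.le _ (hf.isWalk_proj_iterate z N l)).symm ▸ Set.mem_univ (S.proj x n)
  exact ⟨f^[i] z, hn (show S.proj _ n = _ by rw [← S.phiLE_proj hN.le, hi]),
    hmaps.iterate i hz⟩

theorem UniformWalksCoverEdges.circuitsCoverEdges (H : S.UniformWalksCoverEdges) :
    S.CircuitsCoverEdges := fun n => by
  obtain ⟨N, hN, l, -, H⟩ := H n
  refine ⟨N, hN, fun m hm h c (hc : IsCircuitIn _ c) => ?_⟩
  obtain ⟨w, hwc⟩ := exists_walkEdges_subset hc.nonempty (fun _ => hc.snd_mem_fst_image) l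
  refine subset_antisymm (S.edgeMap_phiLE_image_subset h hc.subset) ?_
  rw [← H m hm h w (isWalk_iff_walkEdges_subset.mpr (hwc.trans hc.subset))]
  exact Set.image_mono hwc

theorem CircuitsCoverEdges.circuitsCoverVertices (H : S.CircuitsCoverEdges) :
    S.CircuitsCoverVertices := fun n => by
  obtain ⟨N, hN, H⟩ := H n
  refine ⟨N, hN, fun m hm h c (hc : IsCircuitIn _ c) => ?_⟩
  rw [hc.circVerts_eq]
  exact image_fst_image_eq_univ (H m hm h c hc)

theorem CircuitsCoverVertices.circuitsCoverEdges (H : S.CircuitsCoverVertices) :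
    S.CircuitsCoverEdges := fun n => by
  obtain ⟨N, hN, H⟩ := H (n + 1)
  refine ⟨N, by omega, fun m hm h c (hc : IsCircuitIn _ c) => ?_⟩
  exact S.edgeMap_phiLE_image_eq _ h hc.subset (hc.circVerts_eq ▸ H m hm (by omega) c hc)

theorem CircuitsCoverEdges.walksCoverEdges (H : S.CircuitsCoverEdges) :
    S.WalksCoverEdges := fun n => by
  obtain ⟨N, hN, H⟩ := H n
  refine ⟨N, hN, fun m hm h => ⟨Fintype.card (S.V m) + 1, by omega, fun w hw => ?_⟩⟩
  obtain ⟨c, hc, hcw⟩ := hw.exists_circuit_subset (by omega)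
  exact subset_antisymm (S.edgeMap_phiLE_image_subset h (isWalk_iff_walkEdges_subset.mp hw))
    ((H m hm h c hc).symm.subset.trans (Set.image_mono hcw))

theorem WalksCoverEdges.walksCoverVertices (H : S.WalksCoverEdges) :
    S.WalksCoverVertices := fun n => by
  obtain ⟨N, hN, H⟩ := H n
  refine ⟨N, hN, fun m hm h => ?_⟩
  obtain ⟨l, hl, H⟩ := H m hm h
  exact ⟨l, hl, fun w hw => image_range_eq_univ_of_edgeMap_image_eq (H w hw)⟩

/-- Walks at level `m ≥ N` project to walks at level `N`, so the length chosen for `N` works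
for all `m`. -/
theorem WalksCoverVertices.uniformWalksCoverVertices (H : S.WalksCoverVertices) :
    S.UniformWalksCoverVertices := fun n => by
  obtain ⟨N, hN, H⟩ := H n
  obtain ⟨l, hl, H⟩ := H N le_rfl hN.le
  refine ⟨N, hN, l, hl, fun m hm h w hw => ?_⟩
  have hcov := H _ (hw.comp fun _ _ => S.phiLE_mem_E hm)
  rwa [Set.range_comp, Set.image_image, funext (S.phiLE_phiLE hm hN.le h)] at hcov

end CoverSystem

theorem minimal_tfae_graph_covers_general (S : CoverSystem) (f : S.X → S.X)
    (hf : S.IsLimitMap f) :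
    List.TFAE
      [ (∀ Y : Set S.X, IsClosed Y → Y.Nonempty → f '' Y = Y → Y = Set.univ),
        (∀ n : ℕ, ∃ N, n < N ∧ ∃ l, 0 < l ∧ ∀ m, N ≤ m → ∀ h : n ≤ m,
          ∀ w : Fin (l + 1) → S.V m, IsWalk (S.G m) l w →
            edgeMap (S.phiLE h) '' walkEdges w = (S.G n).E),
        (∀ n : ℕ, ∃ N, n < N ∧ ∃ l, 0 < l ∧ ∀ m, N ≤ m → ∀ h : n ≤ m,
          ∀ w : Fin (l + 1) → S.V m, IsWalk (S.G m) l w →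
            S.phiLE h '' Set.range w = Set.univ),
        (∀ n : ℕ, ∃ N, n < N ∧ ∀ m, N ≤ m → ∀ h : n ≤ m,
          ∀ c ∈ circuitsOf (S.G m), edgeMap (S.phiLE h) '' c = (S.G n).E),
        (∀ n : ℕ, ∃ N, n < N ∧ ∀ m, N ≤ m → ∀ h : n ≤ m,
          ∀ c ∈ circuitsOf (S.G m), S.phiLE h '' circVerts c = Set.univ),
        (∀ n : ℕ, ∃ N, n < N ∧ ∀ m, N ≤ m → ∀ h : n ≤ m, ∃ l, 0 < l ∧
          ∀ w : Fin (l + 1) → S.V m, IsWalk (S.G m) l w →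
            edgeMap (S.phiLE h) '' walkEdges w = (S.G n).E),
        (∀ n : ℕ, ∃ N, n < N ∧ ∀ m, N ≤ m → ∀ h : n ≤ m, ∃ l, 0 < l ∧
          ∀ w : Fin (l + 1) → S.V m, IsWalk (S.G m) l w →
            S.phiLE h '' Set.range w = Set.univ) ] := by
  tfae_have 1 → 2 := S.uniformWalksCoverEdges_of_isMinimalMap hf
  tfae_have 2 → 3 := CoverSystem.UniformWalksCoverEdges.uniformWalksCoverVertices
  tfae_have 3 → 1 := S.isMinimalMap_of_uniformWalksCoverVertices hf
  tfae_have 2 → 4 := CoverSystem.UniformWalksCoverEdges.circuitsCoverEdges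
  tfae_have 4 → 5 := CoverSystem.CircuitsCoverEdges.circuitsCoverVertices
  tfae_have 5 → 4 := CoverSystem.CircuitsCoverVertices.circuitsCoverEdges
  tfae_have 4 → 6 := CoverSystem.CircuitsCoverEdges.walksCoverEdges
  tfae_have 6 → 7 := CoverSystem.WalksCoverEdges.walksCoverVertices
  tfae_have 7 → 3 := CoverSystem.WalksCoverVertices.uniformWalksCoverVertices
  tfae_finish

/-- Characterizations of minimality of a Cantor system given
as the inverse limit of a sequence of graph covers. -/
theorem minimal_tfae_graph_covers (S : CoverSystem) (f : S.X → S.X)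
    (hf : S.IsLimitMap f) (hCantor : Nonempty (S.X ≃ₜ (ℕ → Bool))) :
    List.TFAE
      [ (∀ Y : Set S.X, IsClosed Y → Y.Nonempty → f '' Y = Y → Y = Set.univ),
        (∀ n : ℕ, ∃ N, n < N ∧ ∃ l, 0 < l ∧ ∀ m, N ≤ m → ∀ h : n ≤ m,
          ∀ w : Fin (l + 1) → S.V m, IsWalk (S.G m) l w →
            edgeMap (S.phiLE h) '' walkEdges w = (S.G n).E),
        (∀ n : ℕ, ∃ N, n < N ∧ ∃ l, 0 < l ∧ ∀ m, N ≤ m → ∀ h : n ≤ m,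
          ∀ w : Fin (l + 1) → S.V m, IsWalk (S.G m) l w →
            S.phiLE h '' Set.range w = Set.univ),
        (∀ n : ℕ, ∃ N, n < N ∧ ∀ m, N ≤ m → ∀ h : n ≤ m,
          ∀ c ∈ circuitsOf (S.G m), edgeMap (S.phiLE h) '' c = (S.G n).E),
        (∀ n : ℕ, ∃ N, n < N ∧ ∀ m, N ≤ m → ∀ h : n ≤ m,
          ∀ c ∈ circuitsOf (S.G m), S.phiLE h '' circVerts c = Set.univ),
        (∀ n : ℕ, ∃ N, n < N ∧ ∀ m, N ≤ m → ∀ h : n ≤ m, ∃ l, 0 < l ∧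
          ∀ w : Fin (l + 1) → S.V m, IsWalk (S.G m) l w →
            edgeMap (S.phiLE h) '' walkEdges w = (S.G n).E),
        (∀ n : ℕ, ∃ N, n < N ∧ ∀ m, N ≤ m → ∀ h : n ≤ m, ∃ l, 0 < l ∧
          ∀ w : Fin (l + 1) → S.V m, IsWalk (S.G m) l w →
            S.phiLE h '' Set.range w = Set.univ) ] :=
  minimal_tfae_graph_covers_general S f hf
end

section
/- Let 𝒢 be a sequence of covers, n ∈ ℕ and l ≥ 1. Then for every m ≥ n + l and every vertex v ∈ V_m, the image φ_{m,n}(W_v(G_m,l)) of the set of walks of length l in G_m starting at v consists of exactly one walk in G_n. -/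
open Filter Topology MeasureTheory

/-! Two edges leaving the same vertex have the same image under a cover, so if two walks in
`G_{k+1}` agree on their first `j + 1` vertices, their images in `G_k` agree on their first
`j + 2`. Applying `m - n ≥ l` covers to two walks of length `l` from `v` therefore makes them
agree everywhere; a walk from `v` exists because every vertex has an outgoing edge. -/

theorem DirGraph.exists_isWalk_start {V : Type} (G : DirGraph V) (l : ℕ) (v : V) :
    ∃ w : Fin (l + 1) → V, IsWalk G l w ∧ w 0 = v := by
  choose next hnext using G.surj_init
  exact ⟨fun i => next^[i] v,
    fun i => by simpa [Function.iterate_succ_apply'] using hnext _, rfl⟩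

namespace IsCover

variable {V₁ V₂ : Type} {G₁ : DirGraph V₁} {G₂ : DirGraph V₂} {ψ : V₁ → V₂}

theorem isWalk_comp (hψ : IsCover G₁ G₂ ψ) {l : ℕ} {w : Fin (l + 1) → V₁}
    (hw : IsWalk G₁ l w) : IsWalk G₂ l (ψ ∘ w) :=
  fun i => hψ.hom _ _ (hw i)

theorem comp_agree_succ (hψ : IsCover G₁ G₂ ψ) {l : ℕ} {w w' : Fin (l + 1) → V₁}
    (hw : IsWalk G₁ l w) (hw' : IsWalk G₁ l w') {j : ℕ}
    (hagree : ∀ i : Fin (l + 1), (i : ℕ) ≤ j → w i = w' i) :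
    ∀ i : Fin (l + 1), (i : ℕ) ≤ j + 1 → ψ (w i) = ψ (w' i) := by
  intro i hi
  cases i using Fin.cases with
  | zero => rw [hagree 0 (Nat.zero_le j)]
  | succ p =>
    have hsource : w p.castSucc = w' p.castSucc :=
      hagree _ (by simp only [Fin.val_succ, Fin.val_castSucc] at hi ⊢; omega)
    exact hψ.posDir _ _ _ (hw p) (hsource ▸ hw' p)

end IsCover

namespace CoverSystem

variable (S : CoverSystem)

theorem phiIter_agree_add (n l : ℕ) :
    ∀ (k j : ℕ) (w w' : Fin (l + 1) → S.V (n + k)),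
      IsWalk (S.G (n + k)) l w → IsWalk (S.G (n + k)) l w' →
      (∀ i : Fin (l + 1), (i : ℕ) ≤ j → w i = w' i) →
      ∀ i : Fin (l + 1), (i : ℕ) ≤ j + k → S.phiIter n k (w i) = S.phiIter n k (w' i)
  | 0, _, _, _, _, _, hagree => hagree
  | k + 1, j, w, w', hw, hw', hagree => fun i hi =>
    phiIter_agree_add n l k (j + 1) _ _ ((S.cover (n + k)).isWalk_comp hw)
      ((S.cover (n + k)).isWalk_comp hw') ((S.cover (n + k)).comp_agree_succ hw hw' hagree)
      i (by omega)

theorem phiLE_add {n k : ℕ} (h : n ≤ n + k) (v : S.V (n + k)) :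
    S.phiLE h v = S.phiIter n k v := by
  suffices ∀ (j : ℕ) (hj : n + k = n + j), S.phiIter n j (cast (congrArg S.V hj) v) =
      S.phiIter n k v from this _ (Nat.add_sub_cancel' h).symm
  rintro j hj
  obtain rfl : j = k := by omega
  rfl

end CoverSystem

theorem image_of_walks_is_singleton_general (S : CoverSystem) (n l : ℕ)
    (m : ℕ) (hm : n + l ≤ m) (v : S.V m) :
    ∃! w' : Fin (l + 1) → S.V n,
      ∃ w : Fin (l + 1) → S.V m, IsWalk (S.G m) l w ∧ w 0 = v ∧
        w' = S.phiLE (le_trans (Nat.le_add_right n l) hm) ∘ w := by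
  obtain ⟨k, rfl⟩ := Nat.exists_eq_add_of_le (le_trans (Nat.le_add_right n l) hm)
  obtain ⟨w₀, hw₀, hw₀v⟩ := (S.G (n + k)).exists_isWalk_start l v
  refine ⟨_, ⟨w₀, hw₀, hw₀v, rfl⟩, ?_⟩
  rintro _ ⟨w, hw, hwv, rfl⟩
  funext i
  simp only [Function.comp_apply, S.phiLE_add]
  refine S.phiIter_agree_add n l k 0 w w₀ hw hw₀ (fun i hi => ?_) i (by omega)
  rw [(Fin.ext (Nat.le_zero.mp hi) : i = 0), hwv, hw₀v]

/-- For `m ≥ n + l` and `v ∈ V_m`, the image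
`φ_{m,n}(W_v(G_m,l))` consists of exactly one walk. -/
theorem image_of_walks_is_singleton (S : CoverSystem) (n l : ℕ) (hl : 0 < l)
    (m : ℕ) (hm : n + l ≤ m) (v : S.V m) :
    ∃! w' : Fin (l + 1) → S.V n,
      ∃ w : Fin (l + 1) → S.V m, IsWalk (S.G m) l w ∧ w 0 = v ∧
        w' = S.phiLE (le_trans (Nat.le_add_right n l) hm) ∘ w :=
  image_of_walks_is_singleton_general S n l m hm v
end

section
/- Let G = (V,E) be a graph and x ∈ ℐ(G). Then there exist nonnegative real numbers s(c) ≥ 0, c ∈ 𝒞(G), such that x = Σ_{c∈𝒞(G)} s(c)·c. -/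
open Filter Topology MeasureTheory

/-!
Induct on the size of the support of `x`. If `x ≠ 0`, conservation at each vertex means that a
vertex entered along an edge with positive coefficient is also left along one; iterating a choice
of such an outgoing edge in the finite vertex set runs into a periodic orbit, which is a circuit `c`
on which `x` is positive. Subtracting `(min_c x) • c` keeps `x` in `ℐ(G)` and removes an edge from
the support.
-/

theorem Fin.sum_castSucc_eq_sum_succ {M : Type*} [AddCancelCommMonoid M] {l : ℕ}
    (g : Fin (l + 1) → M) (hg : g (Fin.last l) = g 0) :
    ∑ k : Fin l, g k.castSucc = ∑ k : Fin l, g k.succ := by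
  apply add_right_cancel (b := g 0)
  conv_lhs => rw [← hg, ← Fin.sum_univ_castSucc]
  rw [Fin.sum_univ_succ, add_comm]

theorem Fintype.sum_indicator_range {α ι M : Type*} [Fintype α] [Fintype ι] [AddCommMonoid M]
    {φ : ι → α} (hφ : Function.Injective φ) (h : α → M) :
    ∑ a, (Set.range φ).indicator h a = ∑ i, h (φ i) := by
  rw [← finsum_eq_sum_of_fintype, ← finsum_mem_def, finsum_mem_range hφ, finsum_eq_sum_of_fintype]

theorem exists_mem_periodicPts_of_mapsTo {α : Type*} [Finite α] {f : α → α} {s : Set α}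
    (hf : Set.MapsTo f s s) (hs : s.Nonempty) : ∃ b ∈ s, b ∈ Function.periodicPts f := by
  obtain ⟨a, ha⟩ := hs
  obtain ⟨i, j, hij, heq⟩ := Finite.exists_ne_map_eq_of_infinite fun n => f^[n] a
  wlog hlt : i < j generalizing i j
  · exact this j i hij.symm heq.symm (lt_of_le_of_ne (not_lt.1 hlt) hij.symm)
  refine ⟨f^[i] a, hf.iterate i ha, Function.mk_mem_periodicPts (Nat.sub_pos_of_lt hlt) ?_⟩
  change f^[j - i] (f^[i] a) = f^[i] a
  rw [← Function.iterate_add_apply, Nat.sub_add_cancel hlt.le, heq]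

section
variable {V : Type} {G : DirGraph V} {c : Set (V × V)}

theorem walkEdges_eq_range {l : ℕ} (w : Fin (l + 1) → V) :
    walkEdges w = Set.range fun k : Fin l => (w k.castSucc, w k.succ) := by
  ext e
  simp [walkEdges, eq_comm]

theorem injective_castSucc_of_isCircuit {l : ℕ} {w : Fin (l + 1) → V}
    (hinj : ∀ i j : Fin (l + 1), i < j → w i = w j → i = 0 ∧ j = Fin.last l) :
    Function.Injective fun k : Fin l => w k.castSucc := by
  intro a b hab
  by_contra hne
  rcases lt_or_gt_of_ne hne with hlt | hlt
  · exact (Fin.castSucc_lt_last b).ne (hinj _ _ (Fin.castSucc_lt_castSucc_iff.2 hlt) hab).2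
  · exact (Fin.castSucc_lt_last a).ne (hinj _ _ (Fin.castSucc_lt_castSucc_iff.2 hlt) hab.symm).2

theorem IsCircuitIn.sum_in_eq_sum_out [Fintype V] (hc : IsCircuitIn G c) (v : V) :
    ∑ u, circVec c (u, v) = ∑ u, circVec c (v, u) := by
  classical
  obtain ⟨l, -, w, -, hcyc, hinj, rfl⟩ := hc
  have hedge : Function.Injective fun k : Fin l => (w k.castSucc, w k.succ) :=
    fun a b hab => injective_castSucc_of_isCircuit hinj (Prod.ext_iff.1 hab).1
  have hsum_edges (h : V × V → ℝ) :
      ∑ e, circVec (walkEdges w) e * h e = ∑ k : Fin l, h (w k.castSucc, w k.succ) := by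
    simp_rw [circVec, walkEdges_eq_range, ← Set.indicator_mul_left, one_mul]
    exact Fintype.sum_indicator_range hedge h
  have hin := hsum_edges fun e => if e.2 = v then 1 else 0
  have hout := hsum_edges fun e => if e.1 = v then 1 else 0
  simp only [mul_ite, mul_one, mul_zero, Fintype.sum_prod_type, Finset.sum_ite_eq',
    Finset.mem_univ, if_true] at hin
  simp only [mul_ite, mul_one, mul_zero, Fintype.sum_prod_type_right, Finset.sum_ite_eq',
    Finset.mem_univ, if_true] at hout
  -- both sides count the steps of the walk at `v`; they agree because the walk is closed
  rw [hin, hout]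
  exact (Fin.sum_castSucc_eq_sum_succ (fun i => if w i = v then (1 : ℝ) else 0)
    (by simp [hcyc])).symm

theorem exists_isCircuitIn_subset_of_mem_periodicPts {S : Set (V × V)} (hS : S ⊆ G.E)
    {f : V → V} {b : V} (hb : b ∈ Function.periodicPts f)
    (hf : ∀ k, (f^[k] b, f^[k + 1] b) ∈ S) : ∃ c, IsCircuitIn G c ∧ c ⊆ S := by
  set p := Function.minimalPeriod f b
  have hp : 0 < p := Function.minimalPeriod_pos_of_mem_periodicPts hb
  let w : Fin (p + 1) → V := fun k => f^[k] b
  have hw : ∀ k : Fin p, (w k.castSucc, w k.succ) ∈ S := fun k => hf k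
  refine ⟨walkEdges w, ⟨p, hp, w, fun k => hS (hw k), Function.iterate_minimalPeriod, ?_, rfl⟩, ?_⟩
  · intro i j hij heq
    change f^[i] b = f^[j] b at heq
    have hinj := Function.iterate_injOn_Iio_minimalPeriod (f := f) (x := b)
    have hi : (i : ℕ) < p := lt_of_lt_of_le hij j.is_le
    have hj : (j : ℕ) = p := by
      by_contra hj
      exact hij.ne (Fin.ext (hinj hi (lt_of_le_of_ne j.is_le hj) heq))
    refine ⟨Fin.ext (hinj hi hp ?_), Fin.ext hj⟩
    change f^[i] b = f^[0] b
    rw [heq, hj, Function.iterate_minimalPeriod, Function.iterate_zero_apply]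
  · rintro _ ⟨k, rfl⟩
    exact hw k

theorem MemI.exists_pos_of_pos_in [Fintype V] {x : V × V → ℝ} (hx : MemI G x) {u v : V}
    (h : 0 < x (u, v)) : ∃ w, 0 < x (v, w) := by
  have hin : 0 < ∑ w, x (w, v) :=
    h.trans_le (Finset.single_le_sum (fun w _ => hx.1.1 (w, v)) (Finset.mem_univ u))
  rw [hx.2 v] at hin
  by_contra! hneg
  exact hin.not_ge (Finset.sum_nonpos fun w _ => hneg w)

theorem MemI.exists_isCircuitIn_pos [Fintype V] {x : V × V → ℝ} (hx : MemI G x) (hx0 : x ≠ 0) :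
    ∃ c, IsCircuitIn G c ∧ ∀ e ∈ c, 0 < x e := by
  obtain ⟨e₀, he₀⟩ := Function.ne_iff.1 hx0
  have hpos : 0 < x e₀ := (hx.1.1 e₀).lt_of_ne' he₀
  let P : Set V := {v | ∃ u, 0 < x (v, u)}
  have hP : ∀ v ∈ P, ∃ u, 0 < x (v, u) ∧ u ∈ P :=
    fun _ ⟨u, hu⟩ => ⟨u, hu, hx.exists_pos_of_pos_in hu⟩
  have : Nonempty V := ⟨e₀.1⟩
  choose! next hnext using hP
  have hmaps : Set.MapsTo next P P := fun v hv => (hnext v hv).2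
  obtain ⟨b, hbP, hb⟩ := exists_mem_periodicPts_of_mapsTo hmaps ⟨e₀.1, e₀.2, hpos⟩
  have hS : {e | 0 < x e} ⊆ G.E := fun e he => by
    by_contra hE
    exact he.ne' (hx.1.2 e hE)
  refine exists_isCircuitIn_subset_of_mem_periodicPts hS hb fun k => ?_
  rw [Function.iterate_succ_apply']
  exact (hnext _ (hmaps.iterate k hbP)).1

theorem MemI.sub_smul_circVec [Fintype V] {x : V × V → ℝ} (hx : MemI G x)
    (hc : IsCircuitIn G c) {m : ℝ} (hm : ∀ e ∈ c, m ≤ x e) : MemI G (x - m • circVec c) := by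
  refine ⟨⟨fun e => ?_, fun e he => ?_⟩, fun v => ?_⟩
  · by_cases hec : e ∈ c
    · simpa [circVec, hec] using hm e hec
    · simpa [circVec, hec] using hx.1.1 e
  · simp [circVec, hx.1.2 e he, show e ∉ c from fun hec => he (hc.subset hec)]
  · simp only [Pi.sub_apply, Pi.smul_apply, smul_eq_mul, Finset.sum_sub_distrib,
      ← Finset.mul_sum, hx.2 v, hc.sum_in_eq_sum_out v]

theorem support_sub_smul_circVec_ssubset {x : V × V → ℝ} (hpos : ∀ e ∈ c, 0 < x e)
    {e₀ : V × V} (he₀ : e₀ ∈ c) :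
    Function.support (x - x e₀ • circVec c) ⊂ Function.support x := by
  refine (Set.ssubset_iff_of_subset fun e he => ?_).2
    ⟨e₀, (hpos e₀ he₀).ne', by simp [circVec, he₀]⟩
  by_cases hec : e ∈ c
  · exact (hpos e hec).ne'
  · simpa [circVec, hec] using he
end

theorem finsum_mem_add_single_mul {α R : Type*} [Semiring R] [DecidableEq α] {C : Set α}
    (hC : C.Finite) {a : α} (ha : a ∈ C) (s g : α → R) (m : R) :
    ∑ᶠ c ∈ C, (s + Pi.single a m : α → R) c * g c = ∑ᶠ c ∈ C, s c * g c + m * g a := by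
  simp only [Pi.add_apply, add_mul]
  rw [finsum_mem_add_distrib hC]
  congr 1
  rw [finsum_mem_eq_finite_toFinset_sum _ hC]
  simp [Pi.single_apply, ite_mul, ha]

/-- Every element of `ℐ(G)` is a nonnegative linear
combination of the circuits of `G`. -/
theorem memI_nonneg_combination_of_circuits {V : Type} [Fintype V]
    (G : DirGraph V) (x : V × V → ℝ) (hx : MemI G x) :
    ∃ s : Set (V × V) → ℝ, (∀ c, 0 ≤ s c) ∧
      ∀ e : V × V, x e = ∑ᶠ c ∈ circuitsOf G, s c * circVec c e := by
  classical
  induction hn : (Function.support x).ncard using Nat.strong_induction_on generalizing x with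
  | _ n ih =>
  by_cases hx0 : x = 0
  · exact ⟨0, fun _ => le_rfl, fun e => by simp [hx0]⟩
  obtain ⟨c, hc, hpos⟩ := hx.exists_isCircuitIn_pos hx0
  obtain ⟨e₀, he₀, hmin⟩ := Set.exists_min_image c x c.toFinite hc.nonempty
  have hlt := Set.ncard_lt_ncard (support_sub_smul_circVec_ssubset hpos he₀)
  obtain ⟨s, hs, hxs⟩ := ih _ (hn ▸ hlt) _ (hx.sub_smul_circVec hc hmin) rfl
  have hsingle : (0 : Set (V × V) → ℝ) ≤ Pi.single c (x e₀) :=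
    Pi.single_nonneg.2 (hpos e₀ he₀).le
  refine ⟨s + Pi.single c (x e₀), fun d => add_nonneg (hs d) (hsingle d), fun e => ?_⟩
  rw [finsum_mem_add_single_mul (C := circuitsOf G) (Set.toFinite _) hc, ← hxs]
  simp
end

section
/- Let G = (V,E) be a graph and c₀ ∈ 𝒞(G) a circuit graph. Then there exists a linear combination c₀ = Σ_{c∈𝒞(G), c≠c₀} s(c)·c with coefficients s(c) ∈ ℝ if and only if every edge of c₀ is contained in some circuit graph c ∈ 𝒞(G) with c ≠ c₀. Moreover, in that case the coefficients s(c) can be chosen to be rational numbers. -/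
open Filter Topology MeasureTheory

/-! Choose for every edge `e` of `c₀` another circuit through `e`. Their sum is a nonnegative
integer circulation that dominates `c₀`, so subtracting `c₀` leaves a nonnegative integer
circulation. Such a circulation is a sum of circuits: following edges of positive flow one must
eventually revisit a vertex, which closes a circuit that can be subtracted. If `c₀` occurs `k`
times in this decomposition, `(k + 1) • c₀` is an integer combination of the other circuits,
whence a rational one for `c₀`. Conversely, at an edge of `c₀` on no other circuit the
right-hand side vanishes. -/

theorem sum_indicator_range_perm_eq {V ι : Type*} [Fintype V] [Fintype ι] {t : ι → V}
    (ht : Function.Injective t) (σ : Equiv.Perm ι) (v : V) :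
    ∑ u, (Set.range fun i => (t i, t (σ i))).indicator (1 : V × V → ℕ) (u, v) =
      ∑ u, (Set.range fun i => (t i, t (σ i))).indicator (1 : V × V → ℕ) (v, u) := by
  classical
  by_cases hv : v ∈ Set.range t
  · obtain ⟨j, rfl⟩ := hv
    have hin : ∀ u, (u, t j) ∈ Set.range (fun i => (t i, t (σ i))) ↔ u = t (σ.symm j) := by
      refine fun u => ⟨?_, fun hu => ⟨σ.symm j, by simp [hu]⟩⟩
      rintro ⟨i, hi⟩
      obtain ⟨rfl, hij⟩ := Prod.mk.inj hi
      simp [← ht hij]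
    have hout : ∀ u, (t j, u) ∈ Set.range (fun i => (t i, t (σ i))) ↔ u = t (σ j) := by
      refine fun u => ⟨?_, fun hu => ⟨j, by simp [hu]⟩⟩
      rintro ⟨i, hi⟩
      obtain ⟨hij, rfl⟩ := Prod.mk.inj hi
      rw [ht hij]
    simp [Set.indicator_apply, hin, hout]
  · have hnot : ∀ u, (u, v) ∉ Set.range (fun i => (t i, t (σ i))) ∧
        (v, u) ∉ Set.range (fun i => (t i, t (σ i))) := fun u =>
      ⟨fun ⟨i, hi⟩ => hv ⟨σ i, (Prod.mk.inj hi).2⟩,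
        fun ⟨i, hi⟩ => hv ⟨i, (Prod.mk.inj hi).1⟩⟩
    simp [Set.indicator_of_notMem (hnot _).1, Set.indicator_of_notMem (hnot _).2]

theorem Multiset.sum_map_sub_count_smul_mem_span {R M ι : Type*} [Semiring R] [AddCommGroup M]
    [Module R M] [DecidableEq ι] (v : ι → M) {A : Set ι} {L : Multiset ι}
    (hL : ∀ i ∈ L, i ∈ A) (i₀ : ι) :
    (L.map v).sum - L.count i₀ • v i₀ ∈ Submodule.span R (v '' (A \ {i₀})) := by
  induction L using Multiset.induction_on with
  | empty => simp
  | cons a L ih =>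
    rw [Multiset.forall_mem_cons] at hL
    have ih := ih hL.2
    rw [Multiset.map_cons, Multiset.sum_cons]
    by_cases ha : a = i₀
    · subst ha
      rw [Multiset.count_cons_self, succ_nsmul]
      convert ih using 1
      abel
    · rw [Multiset.count_cons_of_ne (Ne.symm ha), add_sub_assoc]
      exact add_mem (Submodule.subset_span ⟨a, ⟨hL.1, ha⟩, rfl⟩) ih

theorem exists_rat_finsum_eq_of_mem_span {ι α : Type*} {v : ι → α → ℝ} {D : Set ι}
    (hD : D.Finite) {x : α → ℝ} (hx : x ∈ Submodule.span ℚ (v '' D)) :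
    ∃ s : ι → ℚ, ∀ a, x a = ∑ᶠ i ∈ D, (s i : ℝ) * v i a := by
  rw [← hD.coe_toFinset, Submodule.mem_span_image_finset_iff_exists_fun'] at hx
  obtain ⟨s, rfl⟩ := hx
  refine ⟨s, fun a => ?_⟩
  rw [Finset.sum_apply, ← finsum_mem_coe_finset, hD.coe_toFinset]
  simp only [Pi.smul_apply, Rat.smul_def]

section

variable {V : Type}

namespace IsCircuitIn

variable {G : DirGraph V} {c : Set (V × V)}

theorem subset_s14 (hc : IsCircuitIn G c) : c ⊆ G.E := by
  obtain ⟨l, -, w, hwalk, -, -, rfl⟩ := hc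
  rintro e ⟨i, rfl⟩
  exact hwalk i

theorem nonempty_s14 (hc : IsCircuitIn G c) : c.Nonempty := by
  obtain ⟨l, hl, w, -, -, -, rfl⟩ := hc
  exact ⟨_, ⟨⟨0, hl⟩, rfl⟩⟩

theorem exists_eq_range_finRotate (hc : IsCircuitIn G c) :
    ∃ (n : ℕ) (t : Fin (n + 1) → V),
      Function.Injective t ∧ c = Set.range fun i => (t i, t (finRotate _ i)) := by
  obtain ⟨l, hl, w, -, hclosed, hinj, rfl⟩ := hc
  obtain ⟨n, rfl⟩ := Nat.exists_eq_succ_of_ne_zero hl.ne'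
  have hsucc : ∀ i : Fin (n + 1), w i.succ = w (finRotate _ i).castSucc := by
    intro i
    by_cases hi : i = Fin.last n
    · subst hi
      rw [finRotate_last, Fin.succ_last, hclosed]
      rfl
    · congr 1
      ext
      rw [Fin.val_succ, Fin.val_castSucc, coe_finRotate_of_ne_last hi]
  refine ⟨n, fun i => w i.castSucc, fun i j hij => ?_, ?_⟩
  · by_contra hne
    rcases lt_or_gt_of_ne hne with h | h
    · exact (Fin.castSucc_lt_last j).ne (hinj _ _ (Fin.castSucc_lt_castSucc_iff.2 h) hij).2
    · exact (Fin.castSucc_lt_last i).ne (hinj _ _ (Fin.castSucc_lt_castSucc_iff.2 h) hij.symm).2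
  · ext e
    simp only [walkEdges, Set.mem_ofPred_eq, Set.mem_range, hsucc, eq_comm]

end IsCircuitIn

theorem isCircuitIn_walkEdges_of_seq {G : DirGraph V} {f : ℕ → V} {l : ℕ} (hl : 0 < l)
    (hf : ∀ n, (f n, f (n + 1)) ∈ G.E) (hclosed : f l = f 0)
    (hinj : ∀ a b, a < b → b ≤ l → f a = f b → a = 0 ∧ b = l) :
    IsCircuitIn G (walkEdges fun k : Fin (l + 1) => f k) :=
  ⟨l, hl, _, fun i => hf i, hclosed, fun i j hij he =>
    (hinj i j hij (Nat.lt_succ_iff.1 j.2) he).imp Fin.ext Fin.ext, rfl⟩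

theorem exists_isCircuitIn_of_seq [Finite V] {G : DirGraph V} (f : ℕ → V)
    (hf : ∀ n, (f n, f (n + 1)) ∈ G.E) :
    ∃ c, IsCircuitIn G c ∧ ∀ e ∈ c, ∃ n, e = (f n, f (n + 1)) := by
  classical
  have hrep : ∃ j, ∃ i < j, f i = f j := by
    obtain ⟨a, b, hab, he⟩ := Finite.exists_ne_map_eq_of_infinite f
    rcases hab.lt_or_gt with h | h
    exacts [⟨b, a, h, he⟩, ⟨a, b, h, he.symm⟩]
  -- the first repetition `f i = f j` closes a circuit `f i, …, f j`
  obtain ⟨i, hij, hi⟩ := Nat.find_spec hrep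
  have hmin : ∀ a b, a < b → b < Nat.find hrep → f a ≠ f b :=
    fun a b hab hb he => Nat.find_min hrep hb ⟨a, hab, he⟩
  refine ⟨_, isCircuitIn_walkEdges_of_seq (f := fun k => f (i + k)) (l := Nat.find hrep - i)
    (by omega) (fun n => hf (i + n)) (by simpa [Nat.add_sub_cancel' hij.le] using hi.symm)
    (fun a b hab hb he => ?_), ?_⟩
  · have hb' : i + b = Nat.find hrep := by
      by_contra hne
      exact hmin _ _ (by omega) (by omega) he
    refine ⟨by_contra fun ha => hmin i (i + a) (by omega) (by omega) ?_, by omega⟩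
    rw [he, hb', hi]
  · rintro e ⟨k, rfl⟩
    exact ⟨i + k, rfl⟩

structure IsCirculation [Fintype V] (G : DirGraph V) (g : V × V → ℕ) : Prop where
  mem_E : ∀ e, g e ≠ 0 → e ∈ G.E
  balanced : ∀ v, ∑ u, g (u, v) = ∑ u, g (v, u)

section Circulation

variable [Fintype V] {G : DirGraph V} {g h : V × V → ℕ}

theorem isCirculation_zero : IsCirculation G 0 :=
  ⟨fun _ h => absurd rfl h, fun _ => by simp⟩

theorem IsCirculation.add (hg : IsCirculation G g) (hh : IsCirculation G h) :
    IsCirculation G (g + h) where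
  mem_E e he := by
    by_cases hge : g e = 0
    · exact hh.mem_E e (by simpa [hge] using he)
    · exact hg.mem_E e hge
  balanced v := by simp only [Pi.add_apply, Finset.sum_add_distrib, hg.balanced, hh.balanced]

theorem isCirculation_sum {ι : Type*} {s : Finset ι} {f : ι → V × V → ℕ}
    (hf : ∀ i ∈ s, IsCirculation G (f i)) : IsCirculation G (∑ i ∈ s, f i) :=
  Finset.sum_induction f (IsCirculation G) (fun _ _ => IsCirculation.add) isCirculation_zero hf

theorem IsCirculation.tsub (hg : IsCirculation G g) (hh : IsCirculation G h) (hle : h ≤ g) :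
    IsCirculation G (g - h) where
  mem_E e he := hg.mem_E e fun hge => he (by simp [hge])
  balanced v := by
    have hadd : ∀ e, (g - h) e + h e = g e := fun e => tsub_add_cancel_of_le (hle e)
    have := hg.balanced v
    simp only [← hadd, Finset.sum_add_distrib, hh.balanced v] at this
    exact Nat.add_right_cancel this

theorem IsCircuitIn.isCirculation_indicator {c : Set (V × V)} (hc : IsCircuitIn G c) :
    IsCirculation G (c.indicator 1) := by
  refine ⟨fun e he => hc.subset_s14 (Set.mem_of_indicator_ne_zero he), ?_⟩
  obtain ⟨n, t, ht, rfl⟩ := hc.exists_eq_range_finRotate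
  exact sum_indicator_range_perm_eq ht _

theorem IsCirculation.exists_isCircuitIn_indicator_le (hg : IsCirculation G g) (hg0 : g ≠ 0) :
    ∃ c, IsCircuitIn G c ∧ c.indicator 1 ≤ g := by
  classical
  obtain ⟨⟨v₀, u₀⟩, he₀⟩ : ∃ e, g e ≠ 0 := by
    by_contra! h
    exact hg0 (funext h)
  -- flow entering a vertex must leave it again
  have hstep :
      ∀ v, (∃ u, g (v, u) ≠ 0) → ∃ u, g (v, u) ≠ 0 ∧ ∃ u', g (u, u') ≠ 0 := by
    rintro v ⟨u, hu⟩
    have hout : ∑ u', g (u, u') ≠ 0 := by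
      rw [← hg.balanced u, Ne, Finset.sum_eq_zero_iff]
      exact fun h => hu (h v (Finset.mem_univ v))
    obtain ⟨u', -, hu'⟩ := Finset.exists_ne_zero_of_sum_ne_zero hout
    exact ⟨u, hu, u', hu'⟩
  choose! F hF hFpos using hstep
  set f : ℕ → V := fun n => F^[n] v₀
  have hpos : ∀ n, ∃ u, g (f n, u) ≠ 0 := by
    intro n
    induction n with
    | zero => exact ⟨u₀, he₀⟩
    | succ n ih =>
      simpa only [f, Function.iterate_succ_apply'] using hFpos _ ih
  have hf : ∀ n, g (f n, f (n + 1)) ≠ 0 := fun n => by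
    simpa only [f, Function.iterate_succ_apply'] using hF _ (hpos n)
  obtain ⟨c, hc, hcf⟩ := exists_isCircuitIn_of_seq f fun n => hg.mem_E _ (hf n)
  refine ⟨c, hc, fun e => ?_⟩
  by_cases he : e ∈ c
  · obtain ⟨n, rfl⟩ := hcf e he
    simpa [he] using Nat.one_le_iff_ne_zero.2 (hf n)
  · simp [he]

theorem IsCirculation.exists_multiset_isCircuitIn (hg : IsCirculation G g) :
    ∃ L : Multiset (Set (V × V)), (∀ c ∈ L, IsCircuitIn G c) ∧
      g = (L.map fun c => c.indicator 1).sum := by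
  induction g using WellFoundedLT.induction with
  | ind g ih =>
  by_cases hg0 : g = 0
  · exact ⟨0, by simp, by simp [hg0]⟩
  obtain ⟨c, hc, hle⟩ := hg.exists_isCircuitIn_indicator_le hg0
  have hlt : g - c.indicator 1 < g := by
    refine lt_of_le_of_ne tsub_le_self fun h => ?_
    obtain ⟨e, he⟩ := hc.nonempty_s14
    have hge : 1 ≤ g e := by simpa [he] using hle e
    have := congrFun h e
    simp only [Pi.sub_apply, Set.indicator_of_mem he, Pi.one_apply] at this
    omega
  obtain ⟨L, hL, hsum⟩ := ih _ hlt (hg.tsub hc.isCirculation_indicator hle)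
  refine ⟨c ::ₘ L, Multiset.forall_mem_cons.2 ⟨hc, hL⟩, ?_⟩
  rw [Multiset.map_cons, Multiset.sum_cons, ← hsum, add_tsub_cancel_of_le hle]

end Circulation

theorem circVec_eq_castHom_indicator (c : Set (V × V)) :
    circVec c = (Nat.castAddMonoidHom ℝ).compLeft (V × V) (c.indicator 1) := by
  ext e
  by_cases he : e ∈ c <;> simp [circVec, he]

theorem exists_multiset_circuits_sum_eq_add [Fintype V] {G : DirGraph V} {c₀ : Set (V × V)}
    (hc₀ : c₀ ∈ circuitsOf G) (h : ∀ e ∈ c₀, ∃ c ∈ circuitsOf G, c ≠ c₀ ∧ e ∈ c) :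
    ∃ M L : Multiset (Set (V × V)), (∀ c ∈ M, c ∈ circuitsOf G \ {c₀}) ∧
      (∀ c ∈ L, IsCircuitIn G c) ∧
      (M.map fun c => c.indicator 1).sum =
        (L.map fun c => c.indicator 1).sum + c₀.indicator (1 : V × V → ℕ) := by
  classical
  choose! φ hφ hφne hmem using h
  set F := (Set.toFinite c₀).toFinset
  set S : V × V → ℕ := ∑ x ∈ F, (φ x).indicator 1 with hS_def
  have hle : c₀.indicator 1 ≤ S := by
    intro e
    by_cases he : e ∈ c₀
    · calc c₀.indicator 1 e = (φ e).indicator 1 e := by simp [he, hmem e he]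
        _ ≤ S e := by
          rw [hS_def, Finset.sum_apply]
          exact Finset.single_le_sum (f := fun x => (φ x).indicator (1 : V × V → ℕ) e)
            (fun _ _ => Nat.zero_le _) ((Set.toFinite c₀).mem_toFinset.2 he)
    · simp [he]
  have hS : IsCirculation G S := isCirculation_sum fun x hx =>
    (hφ x ((Set.toFinite c₀).mem_toFinset.1 hx)).isCirculation_indicator
  obtain ⟨L, hL, hLsum⟩ := (hS.tsub hc₀.isCirculation_indicator hle).exists_multiset_isCircuitIn
  refine ⟨F.val.map φ, L, fun c hc => ?_, hL, ?_⟩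
  · obtain ⟨x, hx, rfl⟩ := Multiset.mem_map.1 hc
    have hx := (Set.toFinite c₀).mem_toFinset.1 hx
    exact ⟨hφ x hx, hφne x hx⟩
  · rw [Multiset.map_map, ← hLsum, tsub_add_cancel_of_le hle]
    rfl

theorem circVec_mem_span_circuitsOf_diff [Fintype V] {G : DirGraph V} {c₀ : Set (V × V)}
    (hc₀ : c₀ ∈ circuitsOf G) (h : ∀ e ∈ c₀, ∃ c ∈ circuitsOf G, c ≠ c₀ ∧ e ∈ c) :
    circVec c₀ ∈ Submodule.span ℚ (circVec '' (circuitsOf G \ {c₀})) := by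
  classical
  obtain ⟨M, L, hM, hL, hsum⟩ := exists_multiset_circuits_sum_eq_add hc₀ h
  have hsumℝ : (M.map circVec).sum = (L.map circVec).sum + circVec c₀ := by
    simpa only [map_add, map_multiset_sum, Multiset.map_map, Function.comp_def,
      ← circVec_eq_castHom_indicator] using congrArg ((Nat.castAddMonoidHom ℝ).compLeft _) hsum
  set W := Submodule.span ℚ (circVec '' (circuitsOf G \ {c₀}))
  have hmul : ((L.count c₀ + 1 : ℕ) : ℚ) • circVec c₀ ∈ W := by
    rw [Nat.cast_smul_eq_nsmul, succ_nsmul,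
      show L.count c₀ • circVec c₀ + circVec c₀ = (M.map circVec).sum -
        ((L.map circVec).sum - L.count c₀ • circVec c₀) by rw [hsumℝ]; abel]
    refine sub_mem (multiset_sum_mem _ fun x hx => ?_)
      (Multiset.sum_map_sub_count_smul_mem_span _ hL c₀)
    obtain ⟨c, hc, rfl⟩ := Multiset.mem_map.1 hx
    exact Submodule.subset_span ⟨c, hM c hc, rfl⟩
  exact (W.smul_mem_iff (by positivity)).1 hmul

theorem exists_mem_of_circVec_eq_finsum {D : Set (Set (V × V))} {c₀ : Set (V × V)}
    {s : Set (V × V) → ℝ} (hs : ∀ e, circVec c₀ e = ∑ᶠ c ∈ D, s c * circVec c e)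
    {e : V × V} (he : e ∈ c₀) : ∃ c ∈ D, e ∈ c := by
  have hne : ∑ᶠ c ∈ D, s c * circVec c e ≠ 0 := by
    rw [← hs]
    simp [circVec, he]
  obtain ⟨c, hc, hce⟩ := exists_ne_zero_of_finsum_mem_ne_zero hne
  exact ⟨c, hc, Set.mem_of_indicator_ne_zero (right_ne_zero_of_mul hce)⟩

end

/-- A circuit `c₀` is a (rational) linear combination of the
other circuits iff each of its edges lies on another circuit. -/
theorem circuit_linear_combination_iff_edges_shared {V : Type} [Fintype V]
    (G : DirGraph V) (c₀ : Set (V × V)) (hc₀ : c₀ ∈ circuitsOf G) :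
    ((∃ s : Set (V × V) → ℝ, ∀ e : V × V,
        circVec c₀ e = ∑ᶠ c ∈ circuitsOf G \ {c₀}, s c * circVec c e) ↔
      ∀ e ∈ c₀, ∃ c ∈ circuitsOf G, c ≠ c₀ ∧ e ∈ c) ∧
    ((∀ e ∈ c₀, ∃ c ∈ circuitsOf G, c ≠ c₀ ∧ e ∈ c) →
      ∃ s : Set (V × V) → ℚ, ∀ e : V × V,
        circVec c₀ e = ∑ᶠ c ∈ circuitsOf G \ {c₀}, (s c : ℝ) * circVec c e) := by
  have hrat (h : ∀ e ∈ c₀, ∃ c ∈ circuitsOf G, c ≠ c₀ ∧ e ∈ c) :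
      ∃ s : Set (V × V) → ℚ, ∀ e : V × V,
        circVec c₀ e = ∑ᶠ c ∈ circuitsOf G \ {c₀}, (s c : ℝ) * circVec c e :=
    exists_rat_finsum_eq_of_mem_span (Set.toFinite _) (circVec_mem_span_circuitsOf_diff hc₀ h)
  refine ⟨⟨fun ⟨s, hs⟩ e he => ?_, fun h => ?_⟩, hrat⟩
  · obtain ⟨c, ⟨hc, hne⟩, hec⟩ := exists_mem_of_circVec_eq_finsum hs he
    exact ⟨c, hc, hne, hec⟩
  · obtain ⟨s, hs⟩ := hrat h
    exact ⟨_, hs⟩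
end
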